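/- Feasible-set recursion for a conjunction of 'always' and 'eventually' (instance of Theorem 1 with a nontrivial remaining-index set). Assume U is nonempty. Fix a horizon T ∈ ℕ and sets H_g, H_f ⊆ ℝ^n. For each k ≤ T define A_k = {x : ∃ inputs u_k, …, u_{T−1} ∈ U whose nominal trajectory from x satisfies x_j ∈ H_g for all j ∈ {k, …, T}} and B_k = {x : ∃ inputs u_k, …, u_{T−1} ∈ U whose nominal trajectory from x satisfies x_j ∈ H_g for all j ∈ {k, …, T} and x_j ∈ H_f for some j ∈ {k, …, T}} (the feasible set of G_{[k,T]}(x ∈ H_g) ∧ F_{[k,T]}(x ∈ H_f)). Then B_T = H_g ∩ H_f and, for every k < T, B_k = (H_g ∩ H_f ∩ Υ(A_{k+1})) ∪ (H_g ∩ Υ(B_{k+1})), where A_T = H_g and A_k = H_g ∩ Υ(A_{k+1}) for k < T. -/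
import Mathlib


/-- The state space `ℝ^n`. -/
abbrev Vec (n : ℕ) := EuclideanSpace ℝ (Fin n)

/-- Auxiliary: nominal trajectory, `i` steps after the starting instant `k`. -/
def trajAux {n m : ℕ} (f : Vec n → Vec m → Vec n) (k : ℕ) (x : Vec n)
    (u : ℕ → Vec m) : ℕ → Vec n
  | 0 => x
  | i + 1 => f (trajAux f k x u i) (u (k + i))

/-- Nominal trajectory: `traj f k x u j` is the state at time `j ≥ k`, where the
state at time `k` is `x` and `x_{j+1} = f (x_j, u_j)`. -/
def traj {n m : ℕ} (f : Vec n → Vec m → Vec n) (k : ℕ) (x : Vec n)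
    (u : ℕ → Vec m) (j : ℕ) : Vec n :=
  trajAux f k x u (j - k)

/-- One-step set `Υ(S) = {x : ∃ u ∈ U, f(x,u) ∈ S}`. -/
def oneStep {n m : ℕ} (f : Vec n → Vec m → Vec n) (U : Set (Vec m))
    (S : Set (Vec n)) : Set (Vec n) :=
  {x | ∃ u ∈ U, f x u ∈ S}

lemma trajAux_congr {n m : ℕ} (f : Vec n → Vec m → Vec n) (k : ℕ) (x : Vec n)
    (u u' : ℕ → Vec m) (h : ∀ j, k ≤ j → u j = u' j) :
    ∀ i, trajAux f k x u i = trajAux f k x u' i := by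
  intro i
  induction i with
  | zero => rfl
  | succ i ih => simp only [trajAux, ih, h (k + i) (Nat.le_add_right _ _)]

lemma trajAux_succ {n m : ℕ} (f : Vec n → Vec m → Vec n) (k : ℕ) (x : Vec n)
    (u : ℕ → Vec m) :
    ∀ i, trajAux f (k + 1) (f x (u k)) u i = trajAux f k x u (i + 1) := by
  intro i
  induction i with
  | zero => simp [trajAux]
  | succ i ih =>
      show f (trajAux f (k+1) (f x (u k)) u i) (u (k + 1 + i)) = _
      rw [ih, show k + 1 + i = k + (i + 1) from by omega]
      rfl

lemma traj_self {n m : ℕ} (f : Vec n → Vec m → Vec n) (k : ℕ) (x : Vec n)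
    (u : ℕ → Vec m) : traj f k x u k = x := by
  simp [traj, trajAux]

lemma traj_shift {n m : ℕ} (f : Vec n → Vec m → Vec n) (k : ℕ) (x : Vec n)
    (u : ℕ → Vec m) (j : ℕ) (hj : k + 1 ≤ j) :
    traj f (k + 1) (f x (u k)) u j = traj f k x u j := by
  unfold traj
  have h1 : j - k = (j - (k + 1)) + 1 := by omega
  rw [h1, trajAux_succ]

/-- Feasible-set recursion for the conjunction
`G_{[k,T]} (x ∈ H_g) ∧ F_{[k,T]} (x ∈ H_f)`:
`B_T = H_g ∩ H_f` and `B_k = (H_g ∩ H_f ∩ Υ(A_{k+1})) ∪ (H_g ∩ Υ(B_{k+1}))` for `k < T`,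
where `A_T = H_g` and `A_k = H_g ∩ Υ(A_{k+1})` for `k < T`. -/
theorem always_and_eventually_feasible_set_recursion {n m : ℕ}
    (f : Vec n → Vec m → Vec n) (U : Set (Vec m)) (hU : U.Nonempty)
    (T : ℕ) (Hg Hf : Set (Vec n)) (A B : ℕ → Set (Vec n))
    (hA : ∀ k, k ≤ T → A k =
      {x | ∃ u : ℕ → Vec m,
        (∀ j, k ≤ j → j < T → u j ∈ U) ∧
        (∀ j, k ≤ j → j ≤ T → traj f k x u j ∈ Hg)})
    (hB : ∀ k, k ≤ T → B k =
      {x | ∃ u : ℕ → Vec m,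
        (∀ j, k ≤ j → j < T → u j ∈ U) ∧
        (∀ j, k ≤ j → j ≤ T → traj f k x u j ∈ Hg) ∧
        (∃ j, k ≤ j ∧ j ≤ T ∧ traj f k x u j ∈ Hf)}) :
    B T = Hg ∩ Hf ∧
    (∀ k, k < T →
      B k = (Hg ∩ Hf ∩ oneStep f U (A (k + 1))) ∪ (Hg ∩ oneStep f U (B (k + 1)))) ∧
    A T = Hg ∧
    (∀ k, k < T → A k = Hg ∩ oneStep f U (A (k + 1))) := by
  refine ⟨?_, ?_, ?_, ?_⟩
  · rw [hB T le_rfl]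
    ext x
    constructor
    · rintro ⟨u, -, hg, j, hj1, hj2, hf⟩
      have hjT : j = T := le_antisymm hj2 hj1
      rw [hjT, traj_self] at hf
      exact ⟨by simpa [traj_self] using hg T le_rfl le_rfl, hf⟩
    · rintro ⟨hg, hf⟩
      exact ⟨fun _ => hU.choose, fun j h1 h2 => absurd h2 (by omega),
        fun j h1 h2 => by
          have hjT : j = T := by omega
          rw [hjT, traj_self]; exact hg,
        T, le_rfl, le_rfl, by simpa [traj_self]⟩
  · intro k hk
    rw [hB k hk.le, hB (k+1) hk, hA (k+1) hk]
    ext x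
    constructor
    · rintro ⟨u, hu, hg, j0, hj0k, hj0T, hf⟩
      have hxg : x ∈ Hg := by simpa [traj_self] using hg k le_rfl hk.le
      have huk : u k ∈ U := hu k le_rfl hk
      rcases eq_or_lt_of_le hj0k with h | h
      · left
        refine ⟨⟨hxg, by simpa [← h, traj_self] using hf⟩, u k, huk, u, ?_, ?_⟩
        · exact fun j h1 h2 => hu j (by omega) h2
        · intro j h1 h2
          rw [traj_shift f k x u j h1]
          exact hg j (by omega) h2
      · right
        refine ⟨hxg, u k, huk, u, fun j h1 h2 => hu j (by omega) h2, ?_, j0, h, hj0T, ?_⟩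
        · intro j h1 h2
          rw [traj_shift f k x u j h1]
          exact hg j (by omega) h2
        · rw [traj_shift f k x u j0 h]; exact hf
    · rintro (⟨⟨hxg, hxf⟩, v, hv, u, hu, hg⟩ | ⟨hxg, v, hv, u, hu, hg, j0, hj1, hj2, hf⟩)
      · refine ⟨fun j => if j = k then v else u j, ?_, ?_, k, le_rfl, hk.le, by simpa [traj_self]⟩
        · intro j h1 h2
          by_cases hjk : j = k
          · simpa [hjk] using hv
          · simpa [hjk] using hu j (by omega) h2
        · intro j h1 h2
          rcases eq_or_lt_of_le h1 with h | h
          · simpa [← h, traj_self]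
          · have heq : traj f k x (fun j => if j = k then v else u j) j
                = traj f (k+1) (f x v) u j := by
              have := traj_shift f k x (fun j => if j = k then v else u j) j h
              simp only [if_pos rfl] at this
              rw [← this]
              unfold traj
              exact trajAux_congr f (k+1) (f x v) _ u
                (fun j hj => by simp [show j ≠ k by omega]) _
            rw [heq]
            exact hg j h h2
      · refine ⟨fun j => if j = k then v else u j, ?_, ?_, j0, by omega, hj2, ?_⟩
        · intro j h1 h2
          by_cases hjk : j = k
          · simpa [hjk] using hv
          · simpa [hjk] using hu j (by omega) h2
        · intro j h1 h2
          rcases eq_or_lt_of_le h1 with h | h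
          · simpa [← h, traj_self]
          · have heq : traj f k x (fun j => if j = k then v else u j) j
                = traj f (k+1) (f x v) u j := by
              have := traj_shift f k x (fun j => if j = k then v else u j) j h
              simp only [if_pos rfl] at this
              rw [← this]
              unfold traj
              exact trajAux_congr f (k+1) (f x v) _ u
                (fun j hj => by simp [show j ≠ k by omega]) _
            rw [heq]
            exact hg j h h2
        · have heq : traj f k x (fun j => if j = k then v else u j) j0
              = traj f (k+1) (f x v) u j0 := by
            have := traj_shift f k x (fun j => if j = k then v else u j) j0 hj1
            simp only [if_pos rfl] at this
            rw [← this]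
            unfold traj
            exact trajAux_congr f (k+1) (f x v) _ u
              (fun j hj => by simp [show j ≠ k by omega]) _
          rw [heq]; exact hf
  · rw [hA T le_rfl]
    ext x
    constructor
    · rintro ⟨u, -, hg⟩
      simpa [traj_self] using hg T le_rfl le_rfl
    · intro hg
      exact ⟨fun _ => hU.choose, fun j h1 h2 => absurd h2 (by omega),
        fun j h1 h2 => by
          have hjT : j = T := by omega
          rw [hjT, traj_self]; exact hg⟩
  · intro k hk
    rw [hA k hk.le, hA (k+1) hk]
    ext x
    constructor
    · rintro ⟨u, hu, hg⟩
      refine ⟨by simpa [traj_self] using hg k le_rfl hk.le, u k, hu k le_rfl hk, u,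
        fun j h1 h2 => hu j (by omega) h2, ?_⟩
      intro j h1 h2
      rw [traj_shift f k x u j h1]
      exact hg j (by omega) h2
    · rintro ⟨hxg, v, hv, u, hu, hg⟩
      refine ⟨fun j => if j = k then v else u j, ?_, ?_⟩
      · intro j h1 h2
        by_cases hjk : j = k
        · simpa [hjk] using hv
        · simpa [hjk] using hu j (by omega) h2
      · intro j h1 h2
        rcases eq_or_lt_of_le h1 with h | h
        · simpa [← h, traj_self]
        · have heq : traj f k x (fun j => if j = k then v else u j) j
              = traj f (k+1) (f x v) u j := by
            have := traj_shift f k x (fun j => if j = k then v else u j) j h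
            simp only [if_pos rfl] at this
            rw [← this]
            unfold traj
            exact trajAux_congr f (k+1) (f x v) _ u
              (fun j hj => by simp [show j ≠ k by omega]) _
          rw [heq]
          exact hg j h h2
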